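/- Let Π = ⟨V, A, I, G⟩ be a STRIPS planning task, P ⊆ V a pattern, and B ∈ ℕ. Define Φ_PDB as the set of state–cost pairs ⟨s, c⟩ with s ⊆ V, c ∈ ℕ, such that c + d(α(s)) ≥ B holds in ℕ∞. If ⟨s, c⟩ ∈ Φ_PDB and action a ∈ A is applicable in s, then ⟨s⟦a⟧, c + cost(a)⟩ ∈ Φ_PDB, i.e., (c + cost(a)) + d(α(s⟦a⟧)) ≥ B in ℕ∞. -/

import Mathlib

/-- A STRIPS action over variable type `V`: preconditions, add effects,
delete effects (disjoint from add effects), and a natural-number cost. -/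
structure StripsAction (V : Type*) where
  pre : Set V
  add : Set V
  del : Set V
  cost : ℕ
  del_disj : Disjoint del add

variable {V : Type*}

/-- An action is applicable in a state if its preconditions hold. -/
def StripsAction.applicable (a : StripsAction V) (s : Set V) : Prop := a.pre ⊆ s

/-- The successor state `s⟦a⟧ = (s \ del(a)) ∪ add(a)`. -/
def StripsAction.app (a : StripsAction V) (s : Set V) : Set V := (s \ a.del) ∪ a.add

/-- Result of applying a sequence of actions. -/
def appSeq : Set V → List (StripsAction V) → Set V
  | s, [] => s
  | s, a :: π => appSeq (a.app s) π

/-- A sequence of actions is successively applicable from a state. -/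
def applicableSeq : Set V → List (StripsAction V) → Prop
  | _, [] => True
  | s, a :: π => a.applicable s ∧ applicableSeq (a.app s) π

/-- Cost of an action sequence. -/
def seqCost (π : List (StripsAction V)) : ℕ := (π.map StripsAction.cost).sum

/-- A STRIPS planning task: a set of actions, initial state, and goal. -/
structure StripsTask (V : Type*) where
  acts : Set (StripsAction V)
  init : Set V
  goal : Set V

/-- `π` is a plan for state `s`: all its actions belong to the task, it is
applicable from `s`, and the resulting state satisfies the goal. -/
def StripsTask.IsPlanFrom (T : StripsTask V) (s : Set V) (π : List (StripsAction V)) : Prop :=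
  (∀ a ∈ π, a ∈ T.acts) ∧ applicableSeq s π ∧ T.goal ⊆ appSeq s π

/-- A plan for the task is a plan for its initial state. -/
def StripsTask.IsPlan (T : StripsTask V) (π : List (StripsAction V)) : Prop := T.IsPlanFrom T.init π

/-- The abstract action `a^α` induced by pattern `P`. -/
def StripsAction.abs (a : StripsAction V) (P : Set V) : StripsAction V where
  pre := a.pre ∩ P
  add := a.add ∩ P
  del := a.del ∩ P
  cost := a.cost
  del_disj := a.del_disj.mono Set.inter_subset_left Set.inter_subset_left

/-- The abstract task `⟨P, {a^α | a ∈ A}, sα, G ∩ P⟩`. -/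
def StripsTask.absTask (T : StripsTask V) (P : Set V) (sα : Set V) : StripsTask V where
  acts := (fun a => a.abs P) '' T.acts
  init := sα
  goal := T.goal ∩ P

/-- Abstract goal distance: infimum (in `ℕ∞`) of costs of abstract plans
for `sα` in the abstract task induced by pattern `P`. -/
noncomputable def absDist (T : StripsTask V) (P : Set V) (sα : Set V) : ℕ∞ :=
  sInf {c : ℕ∞ | ∃ π : List (StripsAction V), (T.absTask P sα).IsPlan π ∧ c = (seqCost π : ℕ∞)}

/-- `Vm` is an hmax value function for state `s`: variables in `s` have value 0,
and any other variable's value is the infimum over achievers `a` of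
`cost(a) + max_{p ∈ pre(a)} Vm(p)` (max over the empty set is 0,
infimum over the empty set is ∞). -/
def IsHmaxVal (T : StripsTask V) (s : Set V) (Vm : V → ℕ∞) : Prop :=
  (∀ v ∈ s, Vm v = 0) ∧
  ∀ v ∉ s, Vm v =
    sInf {c : ℕ∞ | ∃ a ∈ T.acts, v ∈ a.add ∧ c = (a.cost : ℕ∞) + sSup (Vm '' a.pre)}

lemma StripsTask.IsPlanFrom.cons {T : StripsTask V} {s : Set V} {a : StripsAction V}
    {π : List (StripsAction V)} (ha : a ∈ T.acts) (happ : a.applicable s)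
    (hπ : T.IsPlanFrom (a.app s) π) : T.IsPlanFrom s (a :: π) := by
  obtain ⟨hacts, happπ, hgoal⟩ := hπ
  refine ⟨?_, ⟨happ, happπ⟩, hgoal⟩
  intro b hb
  rcases List.mem_cons.mp hb with rfl | hb
  exacts [ha, hacts b hb]

lemma StripsAction.applicable.abs {a : StripsAction V} {s : Set V} (happ : a.applicable s)
    (P : Set V) : (a.abs P).applicable (s ∩ P) :=
  Set.inter_subset_inter_left P happ

lemma StripsAction.abs_app_inter (a : StripsAction V) (P s : Set V) :
    (a.abs P).app (s ∩ P) = a.app s ∩ P := by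
  ext x
  simp only [StripsAction.app, StripsAction.abs, Set.mem_union, Set.mem_sdiff, Set.mem_inter_iff]
  tauto

lemma seqCost_cons (a : StripsAction V) (π : List (StripsAction V)) :
    seqCost (a :: π) = a.cost + seqCost π := by
  simp [seqCost]

lemma absDist_le_seqCost {T : StripsTask V} {P sα : Set V} {π : List (StripsAction V)}
    (hπ : (T.absTask P sα).IsPlan π) : absDist T P sα ≤ seqCost π :=
  sInf_le ⟨π, hπ, rfl⟩

/-- Prepending the abstract action `a^α` to an abstract plan for `α(s⟦a⟧)` gives one
for `α(s)`, because abstraction commutes with action application. -/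
lemma absDist_le_cost_add_absDist_app (T : StripsTask V) (P s : Set V) {a : StripsAction V}
    (ha : a ∈ T.acts) (happ : a.applicable s) :
    absDist T P (s ∩ P) ≤ a.cost + absDist T P (a.app s ∩ P) := by
  rw [absDist, absDist, ENat.add_sInf]
  refine le_iInf₂ ?_
  rintro _ ⟨π, hπ, rfl⟩
  have hcons : (T.absTask P (s ∩ P)).IsPlan (a.abs P :: π) := by
    refine StripsTask.IsPlanFrom.cons ⟨a, ha, rfl⟩ (happ.abs P) ?_
    rw [StripsTask.absTask, StripsAction.abs_app_inter]
    exact hπ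
  calc absDist T P (s ∩ P) ≤ seqCost (a.abs P :: π) := absDist_le_seqCost hcons
    _ = a.cost + seqCost π := by rw [seqCost_cons]; push_cast; rfl

theorem stmt9_general (T : StripsTask V) (P : Set V) (B : ℕ) (s : Set V) (c : ℕ)
    (hmem : (B : ℕ∞) ≤ (c : ℕ∞) + absDist T P (s ∩ P))
    (a : StripsAction V) (ha : a ∈ T.acts) (happ : a.applicable s) :
    (B : ℕ∞) ≤ ((c + a.cost : ℕ) : ℕ∞) + absDist T P (a.app s ∩ P) :=
  calc (B : ℕ∞) ≤ c + absDist T P (s ∩ P) := hmem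
    _ ≤ c + (a.cost + absDist T P (a.app s ∩ P)) :=
      add_le_add_right (absDist_le_cost_add_absDist_app T P s ha happ) _
    _ = ((c + a.cost : ℕ) : ℕ∞) + absDist T P (a.app s ∩ P) := by push_cast; ring

/-- Inductivity lemma for the PDB certificate: the set Φ_PDB of state–cost
pairs with `c + d(α(s)) ≥ B` in `ℕ∞` is closed under action application. -/
theorem stmt9 [Fintype V] (T : StripsTask V) (P : Set V) (B : ℕ) (s : Set V) (c : ℕ)
    (hmem : (B : ℕ∞) ≤ (c : ℕ∞) + absDist T P (s ∩ P))
    (a : StripsAction V) (ha : a ∈ T.acts) (happ : a.applicable s) :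
    (B : ℕ∞) ≤ ((c + a.cost : ℕ) : ℕ∞) + absDist T P (a.app s ∩ P) :=
  stmt9_general T P B s c hmem a ha happ
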